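/- Progress and preservation for vertex structure normalization: if Ω; Ψ ⊢ V : τ then there exists V' such that V normalizes to V' (written V ↓ V') and Ω; Ψ ⊢ V' : τ. -/

import Mathlib

/-- Availability annotations -/
inductive Avail : Type
  | avail : Avail
  | unavail : Avail
deriving DecidableEq

/-- Vertex structure (VS) types: single vertex, annotated products,
    type variables, corecursive types. -/
inductive VSTy : Type
  | vert : VSTy
  | prod : VSTy → Avail → VSTy → Avail → VSTy
  | tvar : ℕ → VSTy
  | corec : ℕ → VSTy → VSTy
deriving DecidableEq

/-- Substitution of a VS type for a type variable (capture-avoiding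
    in the sense of not descending under a binder that rebinds `t`). -/
def VSTy.subst (t : ℕ) (σ : VSTy) : VSTy → VSTy
  | .vert => .vert
  | .prod τ₁ a₁ τ₂ a₂ => .prod (VSTy.subst t σ τ₁) a₁ (VSTy.subst t σ τ₂) a₂
  | .tvar s => if s = t then σ else .tvar s
  | .corec s τ => if s = t then .corec s τ else .corec s (VSTy.subst t σ τ)

/-- VS subtyping. -/
inductive SubTy : VSTy → VSTy → Prop
  | refl (τ : VSTy) : SubTy τ τ
  | trans {τ τ'' τ' : VSTy} : SubTy τ τ'' → SubTy τ'' τ' → SubTy τ τ'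
  | prodLeft (τ₁ : VSTy) (a₁ : Avail) (τ₂ : VSTy) (a₂ : Avail) (τ₃ : VSTy) :
      SubTy (.prod τ₁ a₁ τ₂ a₂) (.prod τ₃ .unavail τ₂ a₂)
  | prodRight (τ₁ : VSTy) (a₁ : Avail) (τ₂ : VSTy) (a₂ : Avail) (τ₃ : VSTy) :
      SubTy (.prod τ₁ a₁ τ₂ a₂) (.prod τ₁ a₁ τ₃ .unavail)
  | prodCong {τ₁ τ₁' τ₂ τ₂' : VSTy} (a₁ a₂ : Avail) :
      SubTy τ₁ τ₁' → SubTy τ₂ τ₂' → SubTy (.prod τ₁ a₁ τ₂ a₂) (.prod τ₁' a₁ τ₂' a₂)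
  | corec1 (t : ℕ) (τ : VSTy) : SubTy (.corec t τ) (VSTy.subst t (.corec t τ) τ)
  | corec2 (t : ℕ) (τ : VSTy) : SubTy (VSTy.subst t (.corec t τ) τ) (.corec t τ)

/-- VS type splitting  τ ⇝ τ₁ ⋈ τ₂. -/
inductive VSplit : VSTy → VSTy → VSTy → Prop
  | prod (τ₁ τ₂ : VSTy) :
      VSplit (.prod τ₁ .avail τ₂ .avail)
            (.prod τ₁ .avail τ₂ .unavail)
            (.prod τ₁ .unavail τ₂ .avail)
  | both {τ₁ τ₁' τ₁'' τ₂ τ₂' τ₂'' : VSTy} :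
      VSplit τ₁ τ₁' τ₁'' → VSplit τ₂ τ₂' τ₂'' →
      VSplit (.prod τ₁ .avail τ₂ .avail)
            (.prod τ₁' .avail τ₂' .avail)
            (.prod τ₁'' .avail τ₂'' .avail)
  | left {τ₁ τ₁' τ₁'' : VSTy} (τ₂ : VSTy) (a : Avail) :
      VSplit τ₁ τ₁' τ₁'' →
      VSplit (.prod τ₁ .avail τ₂ a)
            (.prod τ₁' .avail τ₂ a)
            (.prod τ₁'' .avail τ₂ .unavail)
  | right {τ₂ τ₂' τ₂'' : VSTy} (τ₁ : VSTy) (a : Avail) :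
      VSplit τ₂ τ₂' τ₂'' →
      VSplit (.prod τ₁ a τ₂ .avail)
            (.prod τ₁ a τ₂' .avail)
            (.prod τ₁ .unavail τ₂'' .avail)
  | corec {t : ℕ} {τ τ₁ τ₂ : VSTy} :
      VSplit (VSTy.subst t (.corec t τ) τ) τ₁ τ₂ → VSplit (.corec t τ) τ₁ τ₂
  | sub {τ τ₁ τ₁' τ₂ : VSTy} :
      VSplit τ τ₁' τ₂ → SubTy τ₁' τ₁ → VSplit τ τ₁ τ₂
  | comm {τ τ₁ τ₂ : VSTy} : VSplit τ τ₂ τ₁ → VSplit τ τ₁ τ₂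

/-- Names bound in contexts: VS variables or generators. -/
inductive VName : Type
  | var : ℕ → VName
  | gen : ℕ → VName
deriving DecidableEq

/-- A context binds names to VS types. -/
abbrev Ctx := List (VName × VSTy)

/-- Affine context splitting  Ω ⇝ Ω₁ ⋈ Ω₂. -/
inductive CtxSplit : Ctx → Ctx → Ctx → Prop
  | empty : CtxSplit [] [] []
  | comm {Ω Ω₁ Ω₂ : Ctx} : CtxSplit Ω Ω₂ Ω₁ → CtxSplit Ω Ω₁ Ω₂
  | bind {Ω Ω₁ Ω₂ : Ctx} (x : VName) (τ : VSTy) :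
      CtxSplit Ω Ω₁ Ω₂ → CtxSplit ((x, τ) :: Ω) ((x, τ) :: Ω₁) Ω₂
  | typeSplit {Ω Ω₁ Ω₂ : Ctx} {τ τ₁ τ₂ : VSTy} (x : VName) :
      CtxSplit Ω Ω₁ Ω₂ → VSplit τ τ₁ τ₂ →
      CtxSplit ((x, τ) :: Ω) ((x, τ₁) :: Ω₁) ((x, τ₂) :: Ω₂)

/-- Vertex structures. -/
inductive VS : Type
  | var : ℕ → VS
  | gen : ℕ → VS
  | pair : VS → VS → VS
  | fst : VS → VS
  | snd : VS → VS
deriving DecidableEq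

/-- Typing of vertex structures:  Ω; Ψ ⊢ V : τ, with affine context Ω
    and unrestricted context Ψ. -/
inductive HasTy : Ctx → Ctx → VS → VSTy → Prop
  | omegaVar {Ω Ψ : Ctx} {u : ℕ} {τ : VSTy} :
      (VName.var u, τ) ∈ Ω → HasTy Ω Ψ (.var u) τ
  | psiVar {Ω Ψ : Ctx} {u : ℕ} {τ : VSTy} :
      (VName.var u, τ) ∈ Ψ → HasTy Ω Ψ (.var u) τ
  | omegaGen {Ω Ψ : Ctx} {g : ℕ} {τ : VSTy} :
      (VName.gen g, τ) ∈ Ω → HasTy Ω Ψ (.gen g) τ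
  | psiGen {Ω Ψ : Ctx} {g : ℕ} {τ : VSTy} :
      (VName.gen g, τ) ∈ Ψ → HasTy Ω Ψ (.gen g) τ
  | pair {Ω Ω₁ Ω₂ Ψ : Ctx} {V₁ V₂ : VS} {τ₁ τ₂ : VSTy} :
      CtxSplit Ω Ω₁ Ω₂ → HasTy Ω₁ Ψ V₁ τ₁ → HasTy Ω₂ Ψ V₂ τ₂ →
      HasTy Ω Ψ (.pair V₁ V₂) (.prod τ₁ .avail τ₂ .avail)
  | onlyLeftPair {Ω Ψ Ψ' : Ctx} {V₁ V₂ : VS} {τ₁ τ₂ : VSTy} :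
      HasTy Ω Ψ V₁ τ₁ → HasTy [] Ψ' V₂ τ₂ →
      HasTy Ω Ψ (.pair V₁ V₂) (.prod τ₁ .avail τ₂ .unavail)
  | onlyRightPair {Ω Ψ Ψ' : Ctx} {V₁ V₂ : VS} {τ₁ τ₂ : VSTy} :
      HasTy [] Ψ' V₁ τ₁ → HasTy Ω Ψ V₂ τ₂ →
      HasTy Ω Ψ (.pair V₁ V₂) (.prod τ₁ .unavail τ₂ .avail)
  | fst {Ω Ψ : Ctx} {V : VS} {τ₁ τ₂ : VSTy} {a : Avail} :
      HasTy Ω Ψ V (.prod τ₁ .avail τ₂ a) → HasTy Ω Ψ (.fst V) τ₁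
  | snd {Ω Ψ : Ctx} {V : VS} {τ₁ τ₂ : VSTy} {a : Avail} :
      HasTy Ω Ψ V (.prod τ₁ a τ₂ .avail) → HasTy Ω Ψ (.snd V) τ₂
  | sub {Ω Ψ : Ctx} {V : VS} {τ' τ : VSTy} :
      HasTy Ω Ψ V τ' → SubTy τ' τ → HasTy Ω Ψ V τ

/-- Big-step normalization of vertex structures  V ↓ V'. -/
inductive VNorm : VS → VS → Prop
  | var (u : ℕ) : VNorm (.var u) (.var u)
  | gen (g : ℕ) : VNorm (.gen g) (.gen g)
  | pair {V₁ V₁' V₂ V₂' : VS} :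
      VNorm V₁ V₁' → VNorm V₂ V₂' → VNorm (.pair V₁ V₂) (.pair V₁' V₂')
  | fstPair {V V₁ V₂ : VS} : VNorm V (.pair V₁ V₂) → VNorm (.fst V) V₁
  | fstNotPair {V V' : VS} :
      VNorm V V' → (∀ V₁ V₂, V' ≠ .pair V₁ V₂) → VNorm (.fst V) (.fst V')
  | sndPair {V V₁ V₂ : VS} : VNorm V (.pair V₁ V₂) → VNorm (.snd V) V₂
  | sndNotPair {V V' : VS} :
      VNorm V V' → (∀ V₁ V₂, V' ≠ .pair V₁ V₂) → VNorm (.snd V) (.snd V')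

/-- Vertex structure equivalence  Ψ ⊢ V ≡ V' : τ. -/
inductive VSEquiv : Ctx → VS → VS → VSTy → Prop
  | refl {Ψ : Ctx} {V : VS} {τ : VSTy} :
      HasTy [] Ψ V τ → VSEquiv Ψ V V τ
  | comm {Ψ : Ctx} {V V' : VS} {τ : VSTy} :
      VSEquiv Ψ V' V τ → VSEquiv Ψ V V' τ
  | trans {Ψ : Ctx} {V V'' V' : VS} {τ : VSTy} :
      VSEquiv Ψ V V'' τ → VSEquiv Ψ V'' V' τ → VSEquiv Ψ V V' τ
  | pair {Ψ : Ctx} {V₁ V₁' V₂ V₂' : VS} {τ₁ τ₂ : VSTy} :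
      VSEquiv Ψ V₁ V₁' τ₁ → VSEquiv Ψ V₂ V₂' τ₂ →
      VSEquiv Ψ (.pair V₁ V₂) (.pair V₁' V₂') (.prod τ₁ .avail τ₂ .avail)
  | onlyLeftPair {Ψ Ψ' : Ctx} {V₁ V₁' V₂ V₂' : VS} {τ₁ τ₂ : VSTy} :
      VSEquiv Ψ V₁ V₁' τ₁ → VSEquiv Ψ' V₂ V₂' τ₂ →
      VSEquiv Ψ (.pair V₁ V₂) (.pair V₁' V₂') (.prod τ₁ .avail τ₂ .unavail)
  | onlyRightPair {Ψ Ψ' : Ctx} {V₁ V₁' V₂ V₂' : VS} {τ₁ τ₂ : VSTy} :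
      VSEquiv Ψ' V₁ V₁' τ₁ → VSEquiv Ψ V₂ V₂' τ₂ →
      VSEquiv Ψ (.pair V₁ V₂) (.pair V₁' V₂') (.prod τ₁ .unavail τ₂ .avail)
  | fst {Ψ : Ctx} {V V' : VS} {τ₁ τ₂ : VSTy} {a : Avail} :
      VSEquiv Ψ V V' (.prod τ₁ .avail τ₂ a) → VSEquiv Ψ (.fst V) (.fst V') τ₁
  | snd {Ψ : Ctx} {V V' : VS} {τ₁ τ₂ : VSTy} {a : Avail} :
      VSEquiv Ψ V V' (.prod τ₁ a τ₂ .avail) → VSEquiv Ψ (.snd V) (.snd V') τ₂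
  | fstPair {Ψ : Ctx} {V V₁ V₂ : VS} {τ₁ τ₂ : VSTy} {a : Avail} :
      VSEquiv Ψ V (.pair V₁ V₂) (.prod τ₁ .avail τ₂ a) →
      VSEquiv Ψ (.fst V) V₁ τ₁
  | sndPair {Ψ : Ctx} {V V₁ V₂ : VS} {τ₁ τ₂ : VSTy} {a : Avail} :
      VSEquiv Ψ V (.pair V₁ V₂) (.prod τ₁ a τ₂ .avail) →
      VSEquiv Ψ (.snd V) V₂ τ₂
  | sub {Ψ : Ctx} {V V' : VS} {τ' τ : VSTy} :
      VSEquiv Ψ V V' τ' → SubTy τ' τ → VSEquiv Ψ V V' τ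

/-- VNeutral vertex structures: variables, generators, and their projections. -/
inductive VNeutral : VS → Prop
  | var (u : ℕ) : VNeutral (.var u)
  | gen (g : ℕ) : VNeutral (.gen g)
  | fst {V : VS} : VNeutral V → VNeutral (.fst V)
  | snd {V : VS} : VNeutral V → VNeutral (.snd V)

/-- VNormal vertex structures: neutral structures and pairs of normal structures. -/
inductive VNormal : VS → Prop
  | neutral {V : VS} : VNeutral V → VNormal V
  | pair {V₁ V₂ : VS} : VNormal V₁ → VNormal V₂ → VNormal (.pair V₁ V₂)

/-- Vertex paths: a generator followed by a sequence of projections. -/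
inductive IsPath : VS → Prop
  | gen (g : ℕ) : IsPath (.gen g)
  | fst {p : VS} : IsPath p → IsPath (.fst p)
  | snd {p : VS} : IsPath p → IsPath (.snd p)

/-- A context containing only generator bindings. -/
def GenOnly (Ω : Ctx) : Prop := ∀ e ∈ Ω, ∃ g τ, e = (VName.gen g, τ)

/-- Substitution of a vertex structure for a VS variable. -/
def VS.subst (u : ℕ) (W : VS) : VS → VS
  | .var v => if v = u then W else .var v
  | .gen g => .gen g
  | .pair V₁ V₂ => .pair (VS.subst u W V₁) (VS.subst u W V₂)
  | .fst V => .fst (VS.subst u W V)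
  | .snd V => .snd (VS.subst u W V)

/-!
Normalization is constructed by induction on the typing derivation. Every case is immediate
except a projection of a term whose normal form is a pair `(W₁, W₂)`: the typing rule for pairs
only types `W₁` in one half `Ω₁` of a split of `Ω`, while the projection must be typed in `Ω`.
This is weakening along a context order `CtxLe` (drop bindings, replace types by supertypes).
Its pair case needs a split of the smaller context to lift to a split of the larger,
which reduces to `VSplit` being contravariant in the split type along `SubTy`.
-/

lemma VSplit.subTy {τ τ₁ τ₂ : VSTy} (h : VSplit τ τ₁ τ₂) : SubTy τ τ₁ ∧ SubTy τ τ₂ := by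
  induction h with
  | prod => exact ⟨.prodRight _ _ _ _ _, .prodLeft _ _ _ _ _⟩
  | both _ _ ih₁ ih₂ => exact ⟨.prodCong _ _ ih₁.1 ih₂.1, .prodCong _ _ ih₁.2 ih₂.2⟩
  | left _ _ _ ih =>
      exact ⟨.prodCong _ _ ih.1 (.refl _),
        .trans (.prodCong _ _ ih.2 (.refl _)) (.prodRight _ _ _ _ _)⟩
  | right _ _ _ ih =>
      exact ⟨.prodCong _ _ (.refl _) ih.1,
        .trans (.prodCong _ _ (.refl _) ih.2) (.prodLeft _ _ _ _ _)⟩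
  | corec _ ih => exact ⟨.trans (.corec1 _ _) ih.1, .trans (.corec1 _ _) ih.2⟩
  | sub _ hs ih => exact ⟨.trans ih.1 hs, ih.2⟩
  | comm _ ih => exact ⟨ih.2, ih.1⟩

lemma VSplit.sub_both {τ σ₁ σ₂ ρ₁ ρ₂ : VSTy} (h : VSplit τ ρ₁ ρ₂) (h₁ : SubTy ρ₁ σ₁)
    (h₂ : SubTy ρ₂ σ₂) : VSplit τ σ₁ σ₂ :=
  .sub (.comm (.sub (.comm h) h₂)) h₁

lemma VSplit.of_prod_left_unavail {X σ₁ σ₂ : VSTy} (h : VSplit X σ₁ σ₂) :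
    ∀ {A B C : VSTy} {a b : Avail}, X = .prod C .unavail B b →
      VSplit (.prod A a B b) σ₁ σ₂ := by
  induction h with
  | right _ _ h =>
      rintro A _ _ a _ ⟨⟩
      exact (VSplit.right A a h).sub_both (.prodLeft ..) (.prodLeft ..)
  | sub _ hs ih => intro _ _ _ _ _ hX; exact .sub (ih hX) hs
  | comm _ ih => intro _ _ _ _ _ hX; exact .comm (ih hX)
  | _ => rintro _ _ _ _ _ ⟨⟩

lemma VSplit.of_prod_right_unavail {X σ₁ σ₂ : VSTy} (h : VSplit X σ₁ σ₂) :
    ∀ {A B C : VSTy} {a b : Avail}, X = .prod A a C .unavail →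
      VSplit (.prod A a B b) σ₁ σ₂ := by
  induction h with
  | left _ _ h =>
      rintro _ B _ _ b ⟨⟩
      exact (VSplit.left B b h).sub_both (.prodRight ..) (.prodRight ..)
  | sub _ hs ih => intro _ _ _ _ _ hX; exact .sub (ih hX) hs
  | comm _ ih => intro _ _ _ _ _ hX; exact .comm (ih hX)
  | _ => rintro _ _ _ _ _ ⟨⟩

lemma VSplit.of_prod_subTy {A A' B B' : VSTy} (hA : SubTy A A') (hB : SubTy B B')
    (ihA : ∀ {σ₁ σ₂ : VSTy}, VSplit A' σ₁ σ₂ → VSplit A σ₁ σ₂)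
    (ihB : ∀ {σ₁ σ₂ : VSTy}, VSplit B' σ₁ σ₂ → VSplit B σ₁ σ₂)
    {X σ₁ σ₂ : VSTy} (h : VSplit X σ₁ σ₂) :
    ∀ {a b : Avail}, X = .prod A' a B' b → VSplit (.prod A a B b) σ₁ σ₂ := by
  induction h with
  | prod =>
      rintro _ _ ⟨⟩
      exact (VSplit.prod A B).sub_both (.prodCong _ _ hA hB) (.prodCong _ _ hA hB)
  | both h₁ h₂ => rintro _ _ ⟨⟩; exact .both (ihA h₁) (ihB h₂)
  | left _ _ h =>
      rintro _ _ ⟨⟩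
      exact (VSplit.left B _ (ihA h)).sub_both
        (.prodCong _ _ (.refl _) hB) (.prodCong _ _ (.refl _) hB)
  | right _ _ h =>
      rintro _ _ ⟨⟩
      exact (VSplit.right A _ (ihB h)).sub_both
        (.prodCong _ _ hA (.refl _)) (.prodCong _ _ hA (.refl _))
  | corec => rintro _ _ ⟨⟩
  | sub _ hs ih => intro _ _ hX; exact .sub (ih hX) hs
  | comm _ ih => intro _ _ hX; exact .comm (ih hX)

lemma VSplit.of_corec {X σ₁ σ₂ : VSTy} (h : VSplit X σ₁ σ₂) :
    ∀ {t : ℕ} {ρ : VSTy}, X = .corec t ρ → VSplit (VSTy.subst t (.corec t ρ) ρ) σ₁ σ₂ := by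
  induction h with
  | corec h => rintro _ _ ⟨⟩; exact h
  | sub _ hs ih => intro _ _ hX; exact .sub (ih hX) hs
  | comm _ ih => intro _ _ hX; exact .comm (ih hX)
  | _ => rintro _ _ ⟨⟩

lemma VSplit.of_subTy {τ σ : VSTy} (h : SubTy τ σ) :
    ∀ {σ₁ σ₂ : VSTy}, VSplit σ σ₁ σ₂ → VSplit τ σ₁ σ₂ := by
  induction h with
  | refl => exact id
  | trans _ _ ih₁ ih₂ => exact ih₁ ∘ ih₂
  | prodLeft => exact (·.of_prod_left_unavail rfl)
  | prodRight => exact (·.of_prod_right_unavail rfl)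
  | prodCong _ _ h₁ h₂ ih₁ ih₂ => exact (VSplit.of_prod_subTy h₁ h₂ ih₁ ih₂ · rfl)
  | corec1 => exact .corec
  | corec2 => exact (·.of_corec rfl)

inductive CtxLe : Ctx → Ctx → Prop
  | nil : CtxLe [] []
  | drop {Ω' Ω : Ctx} (x : VName) (τ : VSTy) : CtxLe Ω' Ω → CtxLe Ω' ((x, τ) :: Ω)
  | keep {Ω' Ω : Ctx} {τ' : VSTy} (x : VName) (τ : VSTy) :
      SubTy τ τ' → CtxLe Ω' Ω → CtxLe ((x, τ') :: Ω') ((x, τ) :: Ω)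

lemma CtxSplit.ctxLe {Ω Ω₁ Ω₂ : Ctx} (h : CtxSplit Ω Ω₁ Ω₂) : CtxLe Ω₁ Ω ∧ CtxLe Ω₂ Ω := by
  induction h with
  | empty => exact ⟨.nil, .nil⟩
  | comm _ ih => exact ⟨ih.2, ih.1⟩
  | bind x τ _ ih => exact ⟨.keep x τ (.refl τ) ih.1, .drop x τ ih.2⟩
  | typeSplit x _ hs ih => exact ⟨.keep x _ hs.subTy.1 ih.1, .keep x _ hs.subTy.2 ih.2⟩

lemma CtxLe.exists_mem {Ω' Ω : Ctx} (h : CtxLe Ω' Ω) {x : VName} {τ' : VSTy}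
    (hm : (x, τ') ∈ Ω') : ∃ τ, (x, τ) ∈ Ω ∧ SubTy τ τ' := by
  induction h with
  | nil => cases hm
  | drop _ _ _ ih =>
      obtain ⟨τ, hτ, hs⟩ := ih hm
      exact ⟨τ, List.mem_cons_of_mem _ hτ, hs⟩
  | keep _ σ hs _ ih =>
      rcases List.mem_cons.1 hm with heq | hm
      · cases heq
        exact ⟨σ, List.mem_cons_self, hs⟩
      · obtain ⟨τ, hτ, hs'⟩ := ih hm
        exact ⟨τ, List.mem_cons_of_mem _ hτ, hs'⟩

lemma CtxSplit.nil_inv {Ω₁ Ω₂ : Ctx} (h : CtxSplit [] Ω₁ Ω₂) : Ω₁ = [] ∧ Ω₂ = [] := by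
  generalize hΩ : ([] : Ctx) = Ω at h
  induction h with
  | empty => exact ⟨rfl, rfl⟩
  | comm _ ih => exact (ih hΩ).symm
  | bind | typeSplit => cases hΩ

lemma CtxSplit.cons_inv {Ω Ω₁ Ω₂ : Ctx} (h : CtxSplit Ω Ω₁ Ω₂) :
    ∀ {x : VName} {σ : VSTy} {Ω₀ : Ctx}, Ω = (x, σ) :: Ω₀ →
      (∃ Ω₁', Ω₁ = (x, σ) :: Ω₁' ∧ CtxSplit Ω₀ Ω₁' Ω₂) ∨
      (∃ Ω₂', Ω₂ = (x, σ) :: Ω₂' ∧ CtxSplit Ω₀ Ω₁ Ω₂') ∨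
      (∃ σ₁ σ₂ Ω₁' Ω₂', Ω₁ = (x, σ₁) :: Ω₁' ∧ Ω₂ = (x, σ₂) :: Ω₂' ∧
        VSplit σ σ₁ σ₂ ∧ CtxSplit Ω₀ Ω₁' Ω₂') := by
  induction h with
  | empty => rintro _ _ _ ⟨⟩
  | comm _ ih =>
      intro _ _ _ hΩ
      rcases ih hΩ with ⟨Ω₁', rfl, h⟩ | ⟨Ω₂', rfl, h⟩ | ⟨σ₁, σ₂, Ω₁', Ω₂', rfl, rfl, hs, h⟩
      · exact .inr (.inl ⟨Ω₁', rfl, h.comm⟩)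
      · exact .inl ⟨Ω₂', rfl, h.comm⟩
      · exact .inr (.inr ⟨σ₂, σ₁, Ω₂', Ω₁', rfl, rfl, hs.comm, h.comm⟩)
  | bind _ _ h => rintro _ _ _ ⟨⟩; exact .inl ⟨_, rfl, h⟩
  | typeSplit _ h hs => rintro _ _ _ ⟨⟩; exact .inr (.inr ⟨_, _, _, _, rfl, rfl, hs, h⟩)

lemma CtxLe.exists_ctxSplit {Ω' Ω : Ctx} (hle : CtxLe Ω' Ω) :
    ∀ {Ωa Ωb : Ctx}, CtxSplit Ω' Ωa Ωb →
      ∃ Ωa' Ωb', CtxSplit Ω Ωa' Ωb' ∧ CtxLe Ωa Ωa' ∧ CtxLe Ωb Ωb' := by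
  induction hle with
  | nil =>
      intro _ _ h
      obtain ⟨rfl, rfl⟩ := h.nil_inv
      exact ⟨[], [], .empty, .nil, .nil⟩
  | drop x τ _ ih =>
      intro _ _ h
      obtain ⟨Ωa', Ωb', hs, ha, hb⟩ := ih h
      exact ⟨(x, τ) :: Ωa', Ωb', .bind x τ hs, .drop x τ ha, hb⟩
  | keep x τ hsub _ ih =>
      intro _ _ h
      rcases h.cons_inv rfl with ⟨_, rfl, h₀⟩ | ⟨_, rfl, h₀⟩ | ⟨σ₁, σ₂, _, _, rfl, rfl, hσ, h₀⟩
      · obtain ⟨Ωa', Ωb', hs, ha, hb⟩ := ih h₀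
        exact ⟨(x, τ) :: Ωa', Ωb', .bind x τ hs, .keep x τ hsub ha, hb⟩
      · obtain ⟨Ωa', Ωb', hs, ha, hb⟩ := ih h₀
        exact ⟨Ωa', (x, τ) :: Ωb', (hs.comm.bind x τ).comm, ha, .keep x τ hsub hb⟩
      · obtain ⟨Ωa', Ωb', hs, ha, hb⟩ := ih h₀
        exact ⟨(x, σ₁) :: Ωa', (x, σ₂) :: Ωb', .typeSplit x hs (VSplit.of_subTy hsub hσ),
          .keep x σ₁ (.refl _) ha, .keep x σ₂ (.refl _) hb⟩

lemma HasTy.weaken {Ω' Ψ : Ctx} {V : VS} {τ : VSTy} (h : HasTy Ω' Ψ V τ) :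
    ∀ {Ω : Ctx}, CtxLe Ω' Ω → HasTy Ω Ψ V τ := by
  induction h with
  | omegaVar hm =>
      intro _ hle
      obtain ⟨σ, hσ, hs⟩ := hle.exists_mem hm
      exact .sub (.omegaVar hσ) hs
  | psiVar hm => exact fun _ => .psiVar hm
  | omegaGen hm =>
      intro _ hle
      obtain ⟨σ, hσ, hs⟩ := hle.exists_mem hm
      exact .sub (.omegaGen hσ) hs
  | psiGen hm => exact fun _ => .psiGen hm
  | pair hs _ _ ih₁ ih₂ =>
      intro _ hle
      obtain ⟨Ωa', Ωb', hs', ha, hb⟩ := hle.exists_ctxSplit hs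
      exact .pair hs' (ih₁ ha) (ih₂ hb)
  | onlyLeftPair _ _ ih₁ ih₂ => exact fun hle => .onlyLeftPair (ih₁ hle) (ih₂ .nil)
  | onlyRightPair _ _ ih₁ ih₂ => exact fun hle => .onlyRightPair (ih₁ .nil) (ih₂ hle)
  | fst _ ih => exact fun hle => .fst (ih hle)
  | snd _ ih => exact fun hle => .snd (ih hle)
  | sub _ hs ih => exact fun hle => .sub (ih hle) hs

/-- Inverting the typing of a pair through `HasTy.sub` only yields a type that is a product up
to unrolling `corec`, so the projected component is read off through this relation. -/
inductive FstProj : VSTy → VSTy → Prop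
  | prod (τ₁ τ₂ : VSTy) (a : Avail) : FstProj (.prod τ₁ .avail τ₂ a) τ₁
  | corec {t : ℕ} {ρ τ₁ : VSTy} :
      FstProj (VSTy.subst t (.corec t ρ) ρ) τ₁ → FstProj (.corec t ρ) τ₁

inductive SndProj : VSTy → VSTy → Prop
  | prod (τ₁ τ₂ : VSTy) (a : Avail) : SndProj (.prod τ₁ a τ₂ .avail) τ₂
  | corec {t : ℕ} {ρ τ₂ : VSTy} :
      SndProj (VSTy.subst t (.corec t ρ) ρ) τ₂ → SndProj (.corec t ρ) τ₂

lemma SubTy.exists_fstProj {σ τ : VSTy} (h : SubTy σ τ) :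
    ∀ {τ₁ : VSTy}, FstProj τ τ₁ → ∃ σ₁, FstProj σ σ₁ ∧ SubTy σ₁ τ₁ := by
  induction h with
  | refl => exact fun h => ⟨_, h, .refl _⟩
  | trans _ _ ih₁ ih₂ =>
      intro _ h
      obtain ⟨μ₁, hμ, hs₁⟩ := ih₂ h
      obtain ⟨σ₁, hσ, hs₂⟩ := ih₁ hμ
      exact ⟨σ₁, hσ, .trans hs₂ hs₁⟩
  | prodLeft => rintro _ ⟨⟩
  | prodRight => rintro _ ⟨⟩; exact ⟨_, .prod _ _ _, .refl _⟩
  | prodCong _ _ h₁ => rintro _ ⟨⟩; exact ⟨_, .prod _ _ _, h₁⟩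
  | corec1 => exact fun h => ⟨_, .corec h, .refl _⟩
  | corec2 => rintro _ (_ | h); exact ⟨_, h, .refl _⟩

lemma SubTy.exists_sndProj {σ τ : VSTy} (h : SubTy σ τ) :
    ∀ {τ₂ : VSTy}, SndProj τ τ₂ → ∃ σ₂, SndProj σ σ₂ ∧ SubTy σ₂ τ₂ := by
  induction h with
  | refl => exact fun h => ⟨_, h, .refl _⟩
  | trans _ _ ih₁ ih₂ =>
      intro _ h
      obtain ⟨μ₂, hμ, hs₁⟩ := ih₂ h
      obtain ⟨σ₂, hσ, hs₂⟩ := ih₁ hμ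
      exact ⟨σ₂, hσ, .trans hs₂ hs₁⟩
  | prodLeft => rintro _ ⟨⟩; exact ⟨_, .prod _ _ _, .refl _⟩
  | prodRight => rintro _ ⟨⟩
  | prodCong _ _ _ h₂ => rintro _ ⟨⟩; exact ⟨_, .prod _ _ _, h₂⟩
  | corec1 => exact fun h => ⟨_, .corec h, .refl _⟩
  | corec2 => rintro _ (_ | h); exact ⟨_, h, .refl _⟩

lemma HasTy.pair_fst {Ω Ψ : Ctx} {V : VS} {σ : VSTy} (h : HasTy Ω Ψ V σ) :
    ∀ {W₁ W₂ : VS} {τ₁ : VSTy}, V = .pair W₁ W₂ → FstProj σ τ₁ → HasTy Ω Ψ W₁ τ₁ := by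
  induction h with
  | pair hs h₁ => rintro _ _ _ ⟨⟩ ⟨⟩; exact h₁.weaken hs.ctxLe.1
  | onlyLeftPair h₁ => rintro _ _ _ ⟨⟩ ⟨⟩; exact h₁
  | onlyRightPair => rintro _ _ _ _ ⟨⟩
  | sub _ hs ih =>
      intro _ _ _ hV hp
      obtain ⟨σ₁, hσ, hs'⟩ := hs.exists_fstProj hp
      exact .sub (ih hV hσ) hs'
  | _ => rintro _ _ _ ⟨⟩

lemma HasTy.pair_snd {Ω Ψ : Ctx} {V : VS} {σ : VSTy} (h : HasTy Ω Ψ V σ) :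
    ∀ {W₁ W₂ : VS} {τ₂ : VSTy}, V = .pair W₁ W₂ → SndProj σ τ₂ → HasTy Ω Ψ W₂ τ₂ := by
  induction h with
  | pair hs _ h₂ => rintro _ _ _ ⟨⟩ ⟨⟩; exact h₂.weaken hs.ctxLe.2
  | onlyLeftPair => rintro _ _ _ _ ⟨⟩
  | onlyRightPair _ h₂ => rintro _ _ _ ⟨⟩ ⟨⟩; exact h₂
  | sub _ hs ih =>
      intro _ _ _ hV hp
      obtain ⟨σ₂, hσ, hs'⟩ := hs.exists_sndProj hp
      exact .sub (ih hV hσ) hs'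
  | _ => rintro _ _ _ ⟨⟩

lemma VNorm.exists_fst {Ω Ψ : Ctx} {V V' : VS} {τ₁ τ₂ : VSTy} {a : Avail} (hn : VNorm V V')
    (ht : HasTy Ω Ψ V' (.prod τ₁ .avail τ₂ a)) : ∃ W, VNorm (.fst V) W ∧ HasTy Ω Ψ W τ₁ := by
  by_cases hpair : ∃ W₁ W₂, V' = .pair W₁ W₂
  · obtain ⟨W₁, W₂, rfl⟩ := hpair
    exact ⟨W₁, .fstPair hn, ht.pair_fst rfl (.prod _ _ _)⟩
  · exact ⟨_, .fstNotPair hn fun W₁ W₂ h => hpair ⟨W₁, W₂, h⟩, .fst ht⟩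

lemma VNorm.exists_snd {Ω Ψ : Ctx} {V V' : VS} {τ₁ τ₂ : VSTy} {a : Avail} (hn : VNorm V V')
    (ht : HasTy Ω Ψ V' (.prod τ₁ a τ₂ .avail)) : ∃ W, VNorm (.snd V) W ∧ HasTy Ω Ψ W τ₂ := by
  by_cases hpair : ∃ W₁ W₂, V' = .pair W₁ W₂
  · obtain ⟨W₁, W₂, rfl⟩ := hpair
    exact ⟨W₂, .sndPair hn, ht.pair_snd rfl (.prod _ _ _)⟩
  · exact ⟨_, .sndNotPair hn fun W₁ W₂ h => hpair ⟨W₁, W₂, h⟩, .snd ht⟩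

/-- progress and preservation for VS normalization. -/
theorem norm_progress_preservation {Ω Ψ : Ctx} {V : VS} {τ : VSTy}
    (h : HasTy Ω Ψ V τ) :
    ∃ V', VNorm V V' ∧ HasTy Ω Ψ V' τ := by
  induction h with
  | omegaVar hm => exact ⟨_, .var _, .omegaVar hm⟩
  | psiVar hm => exact ⟨_, .var _, .psiVar hm⟩
  | omegaGen hm => exact ⟨_, .gen _, .omegaGen hm⟩
  | psiGen hm => exact ⟨_, .gen _, .psiGen hm⟩
  | pair hs _ _ ih₁ ih₂ =>
      rcases ih₁, ih₂ with ⟨⟨_, hn₁, ht₁⟩, ⟨_, hn₂, ht₂⟩⟩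
      exact ⟨_, .pair hn₁ hn₂, .pair hs ht₁ ht₂⟩
  | onlyLeftPair _ _ ih₁ ih₂ =>
      rcases ih₁, ih₂ with ⟨⟨_, hn₁, ht₁⟩, ⟨_, hn₂, ht₂⟩⟩
      exact ⟨_, .pair hn₁ hn₂, .onlyLeftPair ht₁ ht₂⟩
  | onlyRightPair _ _ ih₁ ih₂ =>
      rcases ih₁, ih₂ with ⟨⟨_, hn₁, ht₁⟩, ⟨_, hn₂, ht₂⟩⟩
      exact ⟨_, .pair hn₁ hn₂, .onlyRightPair ht₁ ht₂⟩
  | fst _ ih => obtain ⟨_, hn, ht⟩ := ih; exact hn.exists_fst ht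
  | snd _ ih => obtain ⟨_, hn, ht⟩ := ih; exact hn.exists_snd ht
  | sub _ hs ih => obtain ⟨_, hn, ht⟩ := ih; exact ⟨_, hn, .sub ht hs⟩
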